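/- Let G be a unimodular compactly generated locally compact group whose rough Cayley graph X is amenable as a metric space. Then G is amenable: for every ε > 0 and every positive integer m there is a compact set L ⊆ G with λ(L) > 0 and λ(LKᵐ ∖ L)/λ(L) < ε, where K is a compact symmetric generating neighbourhood and λ a Haar measure. -/

import Mathlib

open Pointwise

/-- Quasi-isometric-embedding bounds with respect to arbitrary distance functions. -/
def QIEmb {α β : Type*} (d₁ : α → α → ℝ) (d₂ : β → β → ℝ) (C r : ℝ) (f : α → β) : Prop :=
  ∀ x y : α, C⁻¹ * d₁ x y - r ≤ d₂ (f x) (f y) ∧ d₂ (f x) (f y) ≤ C * d₁ x y + r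

/-- The graph metric of a graph, as a real-valued distance. -/
noncomputable def grDist {V : Type*} (Gr : SimpleGraph V) (u v : V) : ℝ := (Gr.dist u v : ℝ)

/-- `X` (the vertex set of `Gr`) is a rough Cayley graph of `G` via the quasi-action
`act` with constants `C₁, r₁`: `Gr` is a uniformly locally finite connected graph
and `act` is a proper cobounded `(C₁,r₁)`-quasi-action of `G` on it. -/
def IsRoughCayleyGraph {G V : Type*} [Group G] [TopologicalSpace G]
    (Gr : SimpleGraph V) (act : G → V → V) (C₁ r₁ : ℝ) : Prop :=
  Gr.Connected ∧
  (∃ M : ℕ, ∀ v : V, (Gr.neighborSet v).Finite ∧ (Gr.neighborSet v).ncard ≤ M) ∧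
  (∀ s : G, QIEmb (grDist Gr) (grDist Gr) C₁ r₁ (act s) ∧
    ∀ y : V, ∃ x : V, grDist Gr (act s x) y ≤ r₁) ∧
  (∀ x : V, grDist Gr (act 1 x) x ≤ r₁) ∧
  (∀ (s t : G) (x : V), grDist Gr (act s (act t x)) (act (s * t) x) ≤ r₁) ∧
  (∀ L : Set G, IsCompact L → ∀ x : V, ∃ R : ℝ, ∀ s ∈ L, grDist Gr (act s x) x ≤ R) ∧
  (∀ R : ℝ, ∀ x : V, IsCompact (closure {s : G | grDist Gr (act s x) x ≤ R})) ∧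
  (∀ x y : V, ∃ s : G, grDist Gr (act s x) y ≤ r₁)

/-- The `c`-boundary of a vertex set `A` in a graph. -/
noncomputable def grBoundary {V : Type*} (Gr : SimpleGraph V) (c : ℝ) (A : Set V) : Set V :=
  {x : V | (∃ a ∈ A, grDist Gr x a ≤ c) ∧ (∃ b ∈ Aᶜ, grDist Gr x b ≤ c)}

/-!
Fix a vertex `x₀` and let `φ s = act s x₀` be the orbit map. It moves by at most `ρ` under right
multiplication by `K`, is `r₁`-coarsely surjective, proper, and its fibres have uniformly bounded
Haar measure. Given a Følner set `A` of the graph, let `L` be the closure of the set of `s` with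
`φ s` within `ρ + r₁` of `A`. Translates of `interior K` over the points of `A` lie in `L` with
bounded overlap, so `μ L ≳ |A|`; and `φ` maps `L Kᵐ \ L` into the `c`-boundary of `A` for
`c ≈ (m + 2) ρ + r₁`, so `μ (L Kᵐ \ L) ≲ |∂_c A|`.
-/

open MeasureTheory Set Topology
open scoped ENNReal Finset

section GraphDist

variable {V : Type*} {Gr : SimpleGraph V}

lemma grDist_nonneg (u v : V) : 0 ≤ grDist Gr u v := Nat.cast_nonneg _

@[simp] lemma grDist_self (v : V) : grDist Gr v v = 0 := by simp [grDist]

lemma grDist_comm (u v : V) : grDist Gr u v = grDist Gr v u := by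
  rw [grDist, grDist, SimpleGraph.dist_comm]

lemma SimpleGraph.Connected.grDist_triangle (hconn : Gr.Connected) (u v w : V) :
    grDist Gr u w ≤ grDist Gr u v + grDist Gr v w := by
  unfold grDist
  exact_mod_cast hconn.dist_triangle

lemma SimpleGraph.Connected.setOf_dist_le_succ_subset (hconn : Gr.Connected) (x : V) (n : ℕ) :
    {y | Gr.dist x y ≤ n + 1} ⊆ ⋃ z ∈ {y | Gr.dist x y ≤ n}, insert z (Gr.neighborSet z) := by
  intro y hy
  by_cases hyn : Gr.dist x y ≤ n
  · exact mem_biUnion hyn (mem_insert y _)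
  obtain ⟨p, hp⟩ := (hconn y x).exists_walk_length_eq_dist
  cases p with
  | nil => simp at hyn
  | cons hadj q =>
    refine mem_biUnion ?_ (mem_insert_of_mem _ hadj.symm)
    have hq := SimpleGraph.dist_le q
    rw [SimpleGraph.Walk.length_cons, SimpleGraph.dist_comm] at hp
    rw [mem_ofPred_eq, SimpleGraph.dist_comm]
    rw [mem_ofPred_eq] at hy
    omega

lemma SimpleGraph.Connected.encard_setOf_dist_le_le (hconn : Gr.Connected) {M : ℕ}
    (hM : ∀ v, (Gr.neighborSet v).encard ≤ M) (x : V) (n : ℕ) :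
    {y | Gr.dist x y ≤ n}.encard ≤ ((M + 1) ^ n : ℕ) := by
  induction n with
  | zero =>
    have hsub : {y | Gr.dist x y ≤ 0} ⊆ {x} := fun y hy =>
      ((hconn x y).dist_eq_zero_iff.mp (Nat.le_zero.mp hy)).symm
    simpa using encard_le_encard hsub
  | succ n ih =>
    have hfin := finite_of_encard_le_coe ih
    calc {y | Gr.dist x y ≤ n + 1}.encard
        ≤ (⋃ z ∈ hfin.toFinset, insert z (Gr.neighborSet z)).encard := by
          simpa using encard_le_encard (hconn.setOf_dist_le_succ_subset x n)
      _ ≤ ∑ z ∈ hfin.toFinset, (insert z (Gr.neighborSet z)).encard :=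
          Finset.set_encard_biUnion_le _ _
      _ ≤ ∑ _z ∈ hfin.toFinset, ((M + 1 : ℕ) : ℕ∞) :=
          Finset.sum_le_sum fun z _ =>
            (encard_insert_le _ _).trans (by push_cast; gcongr; exact hM z)
      _ = {y | Gr.dist x y ≤ n}.encard * (M + 1 : ℕ) := by
          rw [Finset.sum_const, nsmul_eq_mul, hfin.encard_eq_coe_toFinset_card]
      _ ≤ ((M + 1) ^ (n + 1) : ℕ) := by
          rw [pow_succ, Nat.cast_mul]
          gcongr

lemma SimpleGraph.Connected.encard_setOf_grDist_le_le (hconn : Gr.Connected) {M : ℕ}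
    (hM : ∀ v, (Gr.neighborSet v).encard ≤ M) (x : V) (r : ℝ) :
    {y | grDist Gr x y ≤ r}.encard ≤ ((M + 1) ^ ⌈r⌉₊ : ℕ) := by
  refine (encard_le_encard fun y hy => ?_).trans (hconn.encard_setOf_dist_le_le hM x ⌈r⌉₊)
  have hy' : (Gr.dist x y : ℝ) ≤ ⌈r⌉₊ := hy.trans (Nat.le_ceil r)
  exact_mod_cast hy'

lemma Set.Finite.grBoundary (hconn : Gr.Connected) {M : ℕ}
    (hM : ∀ v, (Gr.neighborSet v).encard ≤ M) {A : Set V} (hA : A.Finite) (c : ℝ) :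
    (grBoundary Gr c A).Finite := by
  refine (hA.biUnion fun a _ => finite_of_encard_le_coe
    (hconn.encard_setOf_grDist_le_le hM a c)).subset ?_
  rintro x ⟨⟨a, ha, hxa⟩, -⟩
  exact mem_biUnion ha (by rwa [mem_ofPred_eq, grDist_comm])

end GraphDist

open scoped Classical in
theorem sum_measure_le_mul_measure_biUnion {α ι : Type*} [MeasurableSpace α] (μ : Measure α)
    (F : Finset ι) {s : ι → Set α} (hs : ∀ i ∈ F, MeasurableSet (s i)) {N : ℕ}
    (hN : ∀ x, #{i ∈ F | x ∈ s i} ≤ N) :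
    ∑ i ∈ F, μ (s i) ≤ N * μ (⋃ i ∈ F, s i) := by
  calc ∑ i ∈ F, μ (s i) = ∫⁻ x, ∑ i ∈ F, (s i).indicator 1 x ∂μ := by
        rw [lintegral_finsetSum _ fun i hi => measurable_one.indicator (hs i hi)]
        exact Finset.sum_congr rfl fun i hi => (lintegral_indicator_one (hs i hi)).symm
    _ ≤ ∫⁻ x, (⋃ i ∈ F, s i).indicator (fun _ => (N : ℝ≥0∞)) x ∂μ := by
        refine lintegral_mono fun x => ?_
        by_cases hx : x ∈ ⋃ i ∈ F, s i
        · simp only [indicator_of_mem hx, indicator_apply, Pi.one_apply, Finset.sum_boole]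
          exact_mod_cast hN x
        · have hx' : ∀ i ∈ F, x ∉ s i := fun i hi hxi => hx (mem_biUnion hi hxi)
          simpa [indicator_of_notMem hx] using hx'
    _ = N * μ (⋃ i ∈ F, s i) := lintegral_indicator_const (F.measurableSet_biUnion hs) _

theorem measure_preimage_le_ofReal_ncard_mul {α V : Type*} [MeasurableSpace α] {μ : Measure α}
    {φ : α → V} {β : ℝ} (hβ : ∀ v, μ (φ ⁻¹' {v}) ≤ ENNReal.ofReal β) {S : Set V}
    (hS : S.Finite) : μ (φ ⁻¹' S) ≤ ENNReal.ofReal (S.ncard * β) := by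
  calc μ (φ ⁻¹' S) = μ (⋃ v ∈ hS.toFinset, φ ⁻¹' {v}) := by simp
    _ ≤ ∑ v ∈ hS.toFinset, μ (φ ⁻¹' {v}) := measure_biUnion_finset_le _ _
    _ ≤ ∑ _v ∈ hS.toFinset, ENNReal.ofReal β := Finset.sum_le_sum fun v _ => hβ v
    _ = ENNReal.ofReal (S.ncard * β) := by
        rw [Finset.sum_const, nsmul_eq_mul, ENNReal.ofReal_mul (Nat.cast_nonneg _),
          ENNReal.ofReal_natCast, ncard_eq_toFinset_card _ hS]

theorem ENNReal.lt_ofReal_mul_of_le_ofReal_of_mul_le {x y κ : ℝ≥0∞} {p a N : ℕ} {β ε : ℝ}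
    (hκ : κ ≠ ⊤) (hN : 0 < N) (hβ : 0 < β) (hx : x ≤ ENNReal.ofReal (p * β))
    (hy : a * κ ≤ N * y) (hp : (p : ℝ) < ε * κ.toReal / (N * β) * a) :
    x < ENNReal.ofReal ε * y := by
  have hN' : (0 : ℝ) < N := by exact_mod_cast hN
  have hpβ : (p : ℝ) * β < ε * (a * κ.toReal / N) := by
    calc (p : ℝ) * β < ε * κ.toReal / (N * β) * a * β := mul_lt_mul_of_pos_right hp hβ
      _ = ε * (a * κ.toReal / N) := by field_simp
  calc x ≤ ENNReal.ofReal (p * β) := hx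
    _ < ENNReal.ofReal (ε * (a * κ.toReal / N)) :=
        (ENNReal.ofReal_lt_ofReal_iff_of_nonneg (by positivity)).mpr hpβ
    _ = ENNReal.ofReal ε * (a * κ / N) := by
        rw [ENNReal.ofReal_mul' (by positivity), ENNReal.ofReal_div_of_pos hN',
          ENNReal.ofReal_mul (Nat.cast_nonneg _), ENNReal.ofReal_toReal hκ,
          ENNReal.ofReal_natCast, ENNReal.ofReal_natCast]
    _ ≤ ENNReal.ofReal ε * y := by
        gcongr
        exact ENNReal.div_le_of_le_mul' hy

def coarsePreimage {G V : Type*} (Gr : SimpleGraph V) (φ : G → V) (r : ℝ) (A : Set V) : Set G :=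
  {s | ∃ v ∈ A, grDist Gr (φ s) v ≤ r}

section CoarseFolner

variable {G V : Type*} {Gr : SimpleGraph V} {φ : G → V}

lemma grDist_mul_pow_le [Monoid G] (hconn : Gr.Connected) {K : Set G} {ρ : ℝ}
    (hK : ∀ t, ∀ k ∈ K, grDist Gr (φ (t * k)) (φ t) ≤ ρ) (n : ℕ) :
    ∀ t, ∀ k ∈ K ^ n, grDist Gr (φ (t * k)) (φ t) ≤ n * ρ := by
  induction n with
  | zero => simp
  | succ n ih =>
    rintro t _ ⟨a, ha, b, hb, rfl⟩
    calc grDist Gr (φ (t * (a * b))) (φ t)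
        ≤ grDist Gr (φ (t * a * b)) (φ (t * a)) + grDist Gr (φ (t * a)) (φ t) := by
          rw [← mul_assoc]; exact hconn.grDist_triangle _ _ _
      _ ≤ ρ + n * ρ := add_le_add (hK _ b hb) (ih t a ha)
      _ = (n + 1 : ℕ) * ρ := by push_cast; ring

lemma coarsePreimage_mul_pow_diff_subset [Monoid G] (hconn : Gr.Connected) {K : Set G} {ρ : ℝ}
    (hK : ∀ t, ∀ k ∈ K, grDist Gr (φ (t * k)) (φ t) ≤ ρ) {r c : ℝ} {n : ℕ} (hr : 0 ≤ r)
    (hc : r + n * ρ ≤ c) (A : Set V) :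
    (coarsePreimage Gr φ r A * K ^ n) \ coarsePreimage Gr φ r A ⊆ φ ⁻¹' grBoundary Gr c A := by
  rintro _ ⟨⟨s, ⟨v, hv, hsv⟩, k, hk, rfl⟩, hout⟩
  have hdist : grDist Gr (φ (s * k)) v ≤ c :=
    calc grDist Gr (φ (s * k)) v ≤ grDist Gr (φ (s * k)) (φ s) + grDist Gr (φ s) v :=
          hconn.grDist_triangle _ _ _
      _ ≤ n * ρ + r := add_le_add (grDist_mul_pow_le hconn hK n s k hk) hsv
      _ ≤ c := by linarith
  refine ⟨⟨v, hv, hdist⟩, φ (s * k), fun hA => hout ⟨φ (s * k), hA, by simpa using hr⟩, ?_⟩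
  simpa using (grDist_nonneg _ _).trans hdist

lemma closure_mul_pow_diff_subset [Group G] [TopologicalSpace G] [IsTopologicalGroup G]
    {K : Set G} (hKnhds : K ∈ 𝓝 1) (hKsymm : K⁻¹ = K) (s : Set G) (n : ℕ) :
    (closure s * K ^ n) \ closure s ⊆ (s * K ^ (n + 1)) \ s := by
  refine sdiff_subset_sdiff ?_ subset_closure
  rw [pow_succ', ← mul_assoc]
  refine mul_subset_mul_right (closure_subset_mul_right_of_mem_nhds_one_of_inv s hKnhds ?_)
  intro k hk
  rw [← hKsymm]
  exact inv_mem_inv.mpr hk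

lemma isCompact_closure_coarsePreimage [TopologicalSpace G] (hconn : Gr.Connected) {x₀ : V}
    (hproper : ∀ R, IsCompact (closure {s | grDist Gr (φ s) x₀ ≤ R})) {A : Set V}
    (hA : A.Finite) (r : ℝ) : IsCompact (closure (coarsePreimage Gr φ r A)) := by
  obtain ⟨D, hD⟩ := (hA.image fun v => grDist Gr v x₀).bddAbove
  refine (hproper (r + D)).of_isClosed_subset isClosed_closure (closure_mono ?_)
  rintro s ⟨v, hv, hsv⟩
  exact (hconn.grDist_triangle _ v _).trans (add_le_add hsv (hD (mem_image_of_mem _ hv)))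

lemma smul_subset_setOf_grDist_le [Monoid G] (hconn : Gr.Connected) {K : Set G} {ρ r₀ : ℝ}
    (hK : ∀ t, ∀ k ∈ K, grDist Gr (φ (t * k)) (φ t) ≤ ρ) {t : G} {v : V}
    (ht : grDist Gr (φ t) v ≤ r₀) : t • K ⊆ {s | grDist Gr (φ s) v ≤ ρ + r₀} := by
  rintro _ ⟨k, hk, rfl⟩
  exact (hconn.grDist_triangle _ (φ t) _).trans (add_le_add (hK t k hk) ht)

lemma ncard_mul_measure_interior_le [Group G] [TopologicalSpace G] [ContinuousMul G]
    [MeasurableSpace G] [OpensMeasurableSpace G] (μ : Measure G) [μ.IsMulLeftInvariant]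
    (hconn : Gr.Connected) {M : ℕ} (hM : ∀ v, (Gr.neighborSet v).encard ≤ M) {K : Set G}
    {ρ r₀ : ℝ} (hK : ∀ t, ∀ k ∈ K, grDist Gr (φ (t * k)) (φ t) ≤ ρ)
    (hsurj : ∀ v, ∃ t, grDist Gr (φ t) v ≤ r₀) {A : Set V} (hA : A.Finite) :
    A.ncard * μ (interior K) ≤
      ((M + 1) ^ ⌈ρ + r₀⌉₊ : ℕ) * μ (closure (coarsePreimage Gr φ (ρ + r₀) A)) := by
  classical
  choose t ht using hsurj
  have hcover : ∀ v, t v • interior K ⊆ {s | grDist Gr (φ s) v ≤ ρ + r₀} := fun v =>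
    (smul_set_mono interior_subset).trans (smul_subset_setOf_grDist_le hconn hK (ht v))
  have hmult : ∀ x, #{v ∈ hA.toFinset | x ∈ t v • interior K} ≤ (M + 1) ^ ⌈ρ + r₀⌉₊ := by
    intro x
    have hsub : (↑{v ∈ hA.toFinset | x ∈ t v • interior K} : Set V) ⊆
        {w | grDist Gr (φ x) w ≤ ρ + r₀} := by
      intro v hv
      simp only [Finset.coe_filter, mem_ofPred_eq] at hv
      exact hcover v hv.2
    have := (encard_le_encard hsub).trans (hconn.encard_setOf_grDist_le_le hM (φ x) (ρ + r₀))
    exact_mod_cast this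
  calc (A.ncard : ℝ≥0∞) * μ (interior K) = ∑ v ∈ hA.toFinset, μ (t v • interior K) := by
        simp [measure_smul, ncard_eq_toFinset_card _ hA]
    _ ≤ ((M + 1) ^ ⌈ρ + r₀⌉₊ : ℕ) * μ (⋃ v ∈ hA.toFinset, t v • interior K) :=
        sum_measure_le_mul_measure_biUnion μ _
          (fun v _ => (isOpen_interior.smul _).measurableSet) hmult
    _ ≤ ((M + 1) ^ ⌈ρ + r₀⌉₊ : ℕ) * μ (closure (coarsePreimage Gr φ (ρ + r₀) A)) := by
        gcongr
        refine iUnion₂_subset fun v hv => (hcover v).trans (subset_closure.trans' ?_)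
        exact fun s hs => ⟨v, hA.mem_toFinset.mp hv, hs⟩

end CoarseFolner

theorem exists_isCompact_measure_mul_pow_diff_lt {G V : Type*} [Group G] [TopologicalSpace G]
    [IsTopologicalGroup G] [MeasurableSpace G] [OpensMeasurableSpace G] (μ : Measure G)
    [μ.IsHaarMeasure] {K : Set G} (hKcomp : IsCompact K) (hKnhds : K ∈ 𝓝 1) (hKsymm : K⁻¹ = K)
    {Gr : SimpleGraph V} (hconn : Gr.Connected) {M : ℕ}
    (hM : ∀ v, (Gr.neighborSet v).encard ≤ M) {φ : G → V} {x₀ : V} {ρ r₀ β : ℝ}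
    (hρ : 0 ≤ ρ) (hr₀ : 0 ≤ r₀) (hβ : 0 < β)
    (hK : ∀ t, ∀ k ∈ K, grDist Gr (φ (t * k)) (φ t) ≤ ρ)
    (hsurj : ∀ v, ∃ t, grDist Gr (φ t) v ≤ r₀)
    (hproper : ∀ R, IsCompact (closure {s | grDist Gr (φ s) x₀ ≤ R}))
    (hfiber : ∀ v, μ (φ ⁻¹' {v}) ≤ ENNReal.ofReal β)
    (hXamen : ∀ c ε : ℝ, 0 < c → 0 < ε → ∃ A : Set V, A.Finite ∧ A.Nonempty ∧
      ((grBoundary Gr c A).ncard : ℝ) < ε * (A.ncard : ℝ))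
    {ε : ℝ} (hε : 0 < ε) (m : ℕ) :
    ∃ L : Set G, IsCompact L ∧ 0 < μ L ∧ μ ((L * K ^ m) \ L) < ENNReal.ofReal ε * μ L := by
  set N : ℕ := (M + 1) ^ ⌈ρ + r₀⌉₊
  set κ := μ (interior K)
  have hκ_pos : 0 < κ := isOpen_interior.measure_pos μ ⟨1, mem_interior_iff_mem_nhds.mpr hKnhds⟩
  have hκ_top : κ ≠ ⊤ := (measure_mono interior_subset).trans_lt hKcomp.measure_lt_top |>.ne
  set c := ρ + r₀ + (m + 1) * ρ + 1
  obtain ⟨A, hA, ⟨v, hv⟩, hbdry⟩ := hXamen c (ε * κ.toReal / (N * β)) (by positivity)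
    (by have := ENNReal.toReal_pos hκ_pos.ne' hκ_top; positivity)
  set P := coarsePreimage Gr φ (ρ + r₀) A
  refine ⟨closure P, isCompact_closure_coarsePreimage hconn hproper hA _, ?_, ?_⟩
  · obtain ⟨t, ht⟩ := hsurj v
    calc 0 < κ := hκ_pos
      _ = μ (t • interior K) := (measure_smul μ t _).symm
      _ ≤ μ (closure P) := measure_mono <| (smul_set_mono interior_subset).trans <|
          (smul_subset_setOf_grDist_le hconn hK ht).trans fun s hs => subset_closure ⟨v, hv, hs⟩
  · have hdiff : (closure P * K ^ m) \ closure P ⊆ φ ⁻¹' grBoundary Gr c A :=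
      (closure_mul_pow_diff_subset hKnhds hKsymm P m).trans <|
        coarsePreimage_mul_pow_diff_subset hconn hK (by positivity) (by push_cast; linarith) A
    refine ENNReal.lt_ofReal_mul_of_le_ofReal_of_mul_le hκ_top (by positivity) hβ
      ((measure_mono hdiff).trans (measure_preimage_le_ofReal_ncard_mul hfiber
        (hA.grBoundary hconn hM c))) (ncard_mul_measure_interior_le μ hconn hM hK hsurj hA) hbdry

namespace IsRoughCayleyGraph

variable {G V : Type*} [Group G] [TopologicalSpace G] {Gr : SimpleGraph V} {act : G → V → V}
  {C₁ r₁ : ℝ}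

lemma nonneg_const (h : IsRoughCayleyGraph Gr act C₁ r₁) : 0 ≤ r₁ := by
  obtain ⟨hconn, -, -, hone, -⟩ := h
  obtain ⟨x⟩ := hconn.nonempty
  exact (grDist_nonneg _ _).trans (hone x)

lemma exists_grDist_mul_le (h : IsRoughCayleyGraph Gr act C₁ r₁) (hC₁ : 0 ≤ C₁) {K : Set G}
    (hK : IsCompact K) (x₀ : V) :
    ∃ ρ, 0 ≤ ρ ∧ ∀ t, ∀ k ∈ K, grDist Gr (act (t * k) x₀) (act t x₀) ≤ ρ := by
  have hr₁ := h.nonneg_const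
  obtain ⟨hconn, -, hqa, -, hcompat, hbdd, -, -⟩ := h
  obtain ⟨R, hR⟩ := hbdd K hK x₀
  refine ⟨C₁ * max R 0 + 2 * r₁, by positivity, fun t k hk => ?_⟩
  calc grDist Gr (act (t * k) x₀) (act t x₀)
      ≤ grDist Gr (act (t * k) x₀) (act t (act k x₀)) + grDist Gr (act t (act k x₀)) (act t x₀) :=
        hconn.grDist_triangle _ _ _
    _ ≤ r₁ + (C₁ * grDist Gr (act k x₀) x₀ + r₁) :=
        add_le_add (by rw [grDist_comm]; exact hcompat t k x₀) ((hqa t).1 _ _).2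
    _ ≤ C₁ * max R 0 + 2 * r₁ := by
        have : C₁ * grDist Gr (act k x₀) x₀ ≤ C₁ * max R 0 := by
          gcongr
          exact (hR k hk).trans (le_max_left _ _)
        linarith

lemma preimage_singleton_subset_smul (h : IsRoughCayleyGraph Gr act C₁ r₁) (hC₁ : 0 < C₁)
    {x₀ v : V} {t : G} (ht : grDist Gr (act t x₀) v ≤ r₁) :
    (act · x₀) ⁻¹' {v} ⊆ t • {s | grDist Gr (act s x₀) x₀ ≤ C₁ * (3 * r₁)} := by
  obtain ⟨hconn, -, hqa, -, hcompat, -, -, -⟩ := h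
  intro s (hs : act s x₀ = v)
  rw [mem_smul_set_iff_inv_smul_mem, smul_eq_mul, mem_ofPred_eq]
  have hlow := ((hqa t).1 (act (t⁻¹ * s) x₀) x₀).1
  have hup : grDist Gr (act t (act (t⁻¹ * s) x₀)) (act t x₀) ≤ r₁ + r₁ :=
    calc grDist Gr (act t (act (t⁻¹ * s) x₀)) (act t x₀)
        ≤ grDist Gr (act t (act (t⁻¹ * s) x₀)) (act s x₀) + grDist Gr (act s x₀) (act t x₀) :=
          hconn.grDist_triangle _ _ _
      _ ≤ r₁ + r₁ := by
          refine add_le_add ?_ (by rw [hs, grDist_comm]; exact ht)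
          simpa using hcompat t (t⁻¹ * s) x₀
  rw [← inv_mul_le_iff₀ hC₁]
  linarith

lemma exists_measure_preimage_singleton_le [MeasurableSpace G]
    (h : IsRoughCayleyGraph Gr act C₁ r₁) (hC₁ : 0 < C₁) (μ : Measure G) [μ.IsMulLeftInvariant]
    [IsFiniteMeasureOnCompacts μ] (x₀ : V) :
    ∃ β, 0 < β ∧ ∀ v, μ ((act · x₀) ⁻¹' {v}) ≤ ENNReal.ofReal β := by
  set B := closure {s | grDist Gr (act s x₀) x₀ ≤ C₁ * (3 * r₁)}
  have hsub : ∀ {v t}, grDist Gr (act t x₀) v ≤ r₁ → (act · x₀) ⁻¹' {v} ⊆ t • B := fun ht =>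
    (h.preimage_singleton_subset_smul hC₁ ht).trans (smul_set_mono subset_closure)
  obtain ⟨-, -, -, -, -, -, hproper, hcob⟩ := h
  have hB : μ B ≠ ⊤ := (hproper _ x₀).measure_lt_top.ne
  refine ⟨μ.real B + 1, by positivity, fun v => ?_⟩
  obtain ⟨t, ht⟩ := hcob x₀ v
  calc μ ((act · x₀) ⁻¹' {v}) ≤ μ (t • B) := measure_mono (hsub ht)
    _ = μ B := measure_smul μ t B
    _ ≤ ENNReal.ofReal (μ.real B + 1) := by
        rw [ENNReal.ofReal_add measureReal_nonneg zero_le_one, ofReal_measureReal hB]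
        exact le_self_add

end IsRoughCayleyGraph

theorem rough_cayley_graph_amenable_implies_folner_general
    {G V : Type*} [Group G] [TopologicalSpace G] [IsTopologicalGroup G]
    [MeasurableSpace G] [BorelSpace G]
    (μ : MeasureTheory.Measure G) [μ.IsHaarMeasure]
    (K : Set G) (hKcomp : IsCompact K) (hKnhds : K ∈ nhds (1 : G)) (hKsymm : K⁻¹ = K)
    (Gr : SimpleGraph V) (act : G → V → V) (C₁ r₁ : ℝ) (hC₁ : 1 ≤ C₁)
    (hrcg : IsRoughCayleyGraph Gr act C₁ r₁)
    (hXamen : ∀ c ε : ℝ, 0 < c → 0 < ε → ∃ A : Set V, A.Finite ∧ A.Nonempty ∧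
      ((grBoundary Gr c A).ncard : ℝ) < ε * (A.ncard : ℝ)) :
    ∀ ε : ℝ, 0 < ε → ∀ m : ℕ, 0 < m → ∃ L : Set G,
      IsCompact L ∧ 0 < μ L ∧ μ ((L * K ^ m) \ L) < ENNReal.ofReal ε * μ L := by
  intro ε hε m _
  obtain ⟨x₀⟩ := hrcg.1.nonempty
  obtain ⟨ρ, hρ, hK⟩ := hrcg.exists_grDist_mul_le (zero_le_one.trans hC₁) hKcomp x₀
  obtain ⟨β, hβ, hfiber⟩ :=
    hrcg.exists_measure_preimage_singleton_le (zero_lt_one.trans_le hC₁) μ x₀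
  have hr₁ := hrcg.nonneg_const
  obtain ⟨hconn, ⟨M, hM⟩, -, -, -, -, hproper, hcob⟩ := hrcg
  exact exists_isCompact_measure_mul_pow_diff_lt μ hKcomp hKnhds hKsymm hconn
    (fun v => encard_le_coe_iff_finite_ncard_le.mpr (hM v)) hρ hr₁ hβ hK (hcob x₀)
    (hproper · x₀) hfiber hXamen hε m

/-- if the rough Cayley graph of a unimodular compactly generated
group is amenable as a metric space, then the group satisfies the Følner condition
(and hence is amenable). -/
theorem rough_cayley_graph_amenable_implies_folner
    {G V : Type*} [Group G] [TopologicalSpace G] [IsTopologicalGroup G] [LocallyCompactSpace G]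
    [MeasurableSpace G] [BorelSpace G]
    (μ : MeasureTheory.Measure G) [μ.IsHaarMeasure] [μ.IsMulRightInvariant]
    (K : Set G) (hKcomp : IsCompact K) (hKnhds : K ∈ nhds (1 : G)) (hKsymm : K⁻¹ = K)
    (hKgen : ∀ g : G, ∃ n : ℕ, g ∈ K ^ n)
    (Gr : SimpleGraph V) (act : G → V → V) (C₁ r₁ : ℝ) (hC₁ : 1 ≤ C₁) (hr₁ : 0 ≤ r₁)
    (hrcg : IsRoughCayleyGraph Gr act C₁ r₁)
    (hXamen : ∀ c ε : ℝ, 0 < c → 0 < ε → ∃ A : Set V, A.Finite ∧ A.Nonempty ∧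
      ((grBoundary Gr c A).ncard : ℝ) < ε * (A.ncard : ℝ)) :
    ∀ ε : ℝ, 0 < ε → ∀ m : ℕ, 0 < m → ∃ L : Set G,
      IsCompact L ∧ 0 < μ L ∧ μ ((L * K ^ m) \ L) < ENNReal.ofReal ε * μ L :=
  rough_cayley_graph_amenable_implies_folner_general μ K hKcomp hKnhds hKsymm Gr act C₁ r₁ hC₁ hrcg
    hXamen
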